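/- arXiv:2602.22094 — 2 statements merged into one kernel-verified Lean document; each statement's English description precedes it below -/
import Mathlib

section
/- For two places u and v of a Petri net with Boolean-valued markings (values in {0,1}), if the two-row linear system [p_u(h); p_v(h)] = [p_u(0); p_v(0)] + [C_u; C_v]·τ̃ + [s⁺_u; s⁺_v] − [s⁻_u; s⁻_v] with τ̃, s ≥ 0 has no real solution when constrained to p_u(h) = 1 and p_v(h) = 1, then no reachable marking has both places u and v true simultaneously; i.e., ¬p_u ∨ ¬p_v is an invariant of the system. -/
/-- Reachability with rebinding, as in the relaxed Petri-net system. -/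
inductive RebindReach {P T : Type*} (C : P → T → ℤ)
    (posReb negReb : P → Prop) : (P → ℤ) → (P → ℤ) → Prop
  | refl (m : P → ℤ) : RebindReach C posReb negReb m m
  | step (m m' m'' : P → ℤ) (t : T) (rp rm : P → ℕ)
      (hp : ∀ p, ¬ posReb p → rp p = 0)
      (hm : ∀ p, ¬ negReb p → rm p = 0)
      (hstep : ∀ p, m'' p = m' p + C p t + (rp p : ℤ) - (rm p : ℤ))
      (hprev : RebindReach C posReb negReb m m') :
      RebindReach C posReb negReb m m''

namespace RebindReach

variable {P T : Type*} {C : P → T → ℤ} {posReb negReb : P → Prop}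

/-- The state equation: `τ` counts the firings of each transition and `sp`, `sm` accumulate
the rebinding slacks. -/
theorem exists_state_equation [Fintype T] {m₀ m : P → ℤ} (h : RebindReach C posReb negReb m₀ m) :
    ∃ (τ : T → ℕ) (sp sm : P → ℕ),
      (∀ p, ¬ posReb p → sp p = 0) ∧ (∀ p, ¬ negReb p → sm p = 0) ∧
      ∀ p, m p = m₀ p + ∑ t, C p t * τ t + sp p - sm p := by
  induction h with
  | refl => exact ⟨0, 0, 0, fun _ _ => rfl, fun _ _ => rfl, by simp⟩
  | step _ _ t rp rm hp hm hstep _ ih =>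
    obtain ⟨τ, sp, sm, hsp, hsm, heq⟩ := ih
    classical
    refine ⟨τ + Pi.single t 1, sp + rp, sm + rm, fun p hp' => ?_, fun p hm' => ?_, fun p => ?_⟩
    · simp [hsp p hp', hp p hp']
    · simp [hsm p hm', hm p hm']
    · have hfire : ∑ t', C p t' * ((τ + Pi.single t 1 : T → ℕ) t' : ℤ) =
          ∑ t', C p t' * τ t' + C p t := by
        simp [mul_add, Finset.sum_add_distrib, Pi.single_apply]
      rw [hstep p, heq p, hfire, Pi.add_apply, Pi.add_apply]
      push_cast
      ring

end RebindReach

/-- for Boolean-valued places `u` and `v`, if the two-row relaxed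
system (rows `u` and `v` of `p_h = p_0 + C·τ̃ + s⁺ − s⁻`, with nonnegative
`τ̃` and slacks supported only on places permitting rebinding) has no real
solution with `p_u(h) = 1` and `p_v(h) = 1`, then no reachable marking has both
`u` and `v` true simultaneously: `¬p_u ∨ ¬p_v` is an invariant. -/
theorem two_row_infeasible_implies_mutex
    {P T : Type*} [Fintype T]
    (C : P → T → ℤ) (posReb negReb : P → Prop) (p0 : P → ℤ) (u v : P)
    (hinf : ¬ ∃ (τ : T → ℝ) (spu spv smu smv : ℝ),
      (∀ t, 0 ≤ τ t) ∧ 0 ≤ spu ∧ 0 ≤ spv ∧ 0 ≤ smu ∧ 0 ≤ smv ∧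
      (¬ posReb u → spu = 0) ∧ (¬ posReb v → spv = 0) ∧
      (¬ negReb u → smu = 0) ∧ (¬ negReb v → smv = 0) ∧
      (1 : ℝ) = (p0 u : ℝ) + (∑ t, (C u t : ℝ) * τ t) + spu - smu ∧
      (1 : ℝ) = (p0 v : ℝ) + (∑ t, (C v t : ℝ) * τ t) + spv - smv) :
    ∀ ph : P → ℤ, RebindReach C posReb negReb p0 ph →
      ¬ (ph u = 1 ∧ ph v = 1) := by
  rintro ph hreach ⟨hu, hv⟩
  obtain ⟨τ, sp, sm, hsp, hsm, heq⟩ := hreach.exists_state_equation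
  have row : ∀ p, (ph p : ℝ) = p0 p + ∑ t, (C p t : ℝ) * τ t + sp p - sm p := fun p => by
    exact_mod_cast heq p
  have slack_zero {s : P → ℕ} {Q : P → Prop} (hs : ∀ p, ¬ Q p → s p = 0) (p : P) :
      ¬ Q p → (s p : ℝ) = 0 := fun hq => by simp [hs p hq]
  refine hinf ⟨fun t => τ t, sp u, sp v, sm u, sm v, fun t => by positivity, by positivity,
    by positivity, by positivity, by positivity, slack_zero hsp u, slack_zero hsp v,
    slack_zero hsm u, slack_zero hsm v, ?_, ?_⟩
  · simpa [hu] using row u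
  · simpa [hv] using row v
end

section
/- If for every action a of a planning problem, the effect of a can be expressed as adding the integer vector C(·,a) to the numeric state, and the goal requires state g, then the existence of a plan implies the integer vector g − s_0 lies in the cone (over nonnegative integers) generated by the columns of C; hence if g − s_0 is not in the rational cone generated by the columns of C, the planning problem is infeasible. -/
/-! Each step adds one column of `C` to the state, so along any plan the displacement `g - s0`
is the sum of the columns of the actions fired, counted with multiplicity. -/

theorem sub_mem_closure_range_of_reflTransGen {M A : Type*} [AddCommGroup M] {v : A → M}
    {r : M → M → Prop} (hr : ∀ s s', r s s' → ∃ a, s' = s + v a) {s t : M}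
    (h : Relation.ReflTransGen r s t) : t - s ∈ AddSubmonoid.closure (Set.range v) := by
  induction h with
  | refl => simp
  | tail _ hstep ih =>
    obtain ⟨a, rfl⟩ := hr _ _ hstep
    rw [add_sub_right_comm]
    exact add_mem ih (AddSubmonoid.subset_closure (Set.mem_range_self a))

/-- if every action `a` adds the integer vector `C(·,a)` to the
numeric state (applicability may further restrict firing), then existence of a
plan from `s0` to the goal state `g` implies that `g − s0` lies in the cone
over `ℕ` generated by the columns of `C`; hence if `g − s0` is not in the
rational cone generated by the columns of `C`, the problem is infeasible. -/
theorem plan_implies_goal_in_cone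
    {P A : Type*} [Fintype A]
    (C : P → A → ℤ) (appl : A → (P → ℤ) → Prop) (s0 g : P → ℤ)
    (Reach : (P → ℤ) → (P → ℤ) → Prop)
    (hReach : Reach = Relation.ReflTransGen
      (fun s s' => ∃ a, appl a s ∧ s' = fun p => s p + C p a)) :
    (Reach s0 g →
      ∃ lam : A → ℕ, ∀ p, g p - s0 p = ∑ a, C p a * (lam a : ℤ)) ∧
    ((¬ ∃ lam : A → ℚ, (∀ a, 0 ≤ lam a) ∧
        ∀ p, ((g p - s0 p : ℤ) : ℚ) = ∑ a, (C p a : ℚ) * lam a) →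
      ¬ Reach s0 g) := by
  have nat_cone : Reach s0 g → ∃ lam : A → ℕ, ∀ p, g p - s0 p = ∑ a, C p a * (lam a : ℤ) := by
    intro hplan
    rw [hReach] at hplan
    have hmem := sub_mem_closure_range_of_reflTransGen (v := fun a p => C p a)
      (fun _ _ ⟨a, _, hstep⟩ => ⟨a, hstep⟩) hplan
    obtain ⟨lam, hlam⟩ := AddSubmonoid.mem_closure_range_iff_of_fintype.1 hmem
    refine ⟨lam, fun p => ?_⟩
    simpa [Finset.sum_apply, mul_comm] using congrFun hlam p
  refine ⟨nat_cone, fun hnot hplan => hnot ?_⟩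
  obtain ⟨lam, hlam⟩ := nat_cone hplan
  exact ⟨fun a => lam a, fun a => Nat.cast_nonneg _, fun p => by rw [hlam p]; push_cast; rfl⟩
end
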